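/- Let L be the tandem walk Laplacian Lf(i,j) = (1/3)(f(i-1,j+1)+f(i+1,j)+f(i,j-1)) - f(i,j). The function v(i,j) = (j+1)(i+1)(i+j+2)(2i^3+3i^2 j+14i^2+5ij+24i-3ij^2-2j^3-4j^2+6j) satisfies L^2 v = 0, i.e., v is bi-harmonic. -/
import Mathlib


/-- Laplacian of the tandem walk on `ℤ²`. -/
noncomputable def tandemLap (f : ℤ → ℤ → ℝ) : ℤ → ℤ → ℝ := fun i j =>
  (1 / 3) * (f (i - 1) (j + 1) + f (i + 1) j + f i (j - 1)) - f i j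

noncomputable def v : ℤ → ℤ → ℝ := fun i j =>
  ((j : ℝ) + 1) * ((i : ℝ) + 1) * ((i : ℝ) + (j : ℝ) + 2) *
    (2 * (i : ℝ) ^ 3 + 3 * (i : ℝ) ^ 2 * (j : ℝ) + 14 * (i : ℝ) ^ 2 + 5 * (i : ℝ) * (j : ℝ)
      + 24 * (i : ℝ) - 3 * (i : ℝ) * (j : ℝ) ^ 2 - 2 * (j : ℝ) ^ 3 - 4 * (j : ℝ) ^ 2
      + 6 * (j : ℝ))

/-- `v` is bi-harmonic for the tandem walk Laplacian: `L² v = 0`. -/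
theorem tandem_biharmonic_example : ∀ i j : ℤ, tandemLap (tandemLap v) i j = 0 := by
  intro i j
  simp only [tandemLap, v]
  push_cast
  ring
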